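/- Given two non-negative integers n and k with n ≥ k > 1, a non-decreasing sequence S = [s₁, s₂, ..., s_n] of non-negative integers is the score sequence of some k-hypertournament on n vertices if and only if for each j with 1 ≤ j ≤ n, ∑_{i=1}^{j} s_i ≥ j·C(n−1,k−1) + C(n−j,k) − C(n,k), with equality when j = n (where C(p,q) denotes the binomial coefficient, taken to be 0 when p < q). -/

import Mathlib

/-- A k-hypertournament on the vertex set `Fin n`: a set of arcs, each a
duplicate-free k-tuple (list) of vertices, such that for every k-subset `S` of
the vertices there is exactly one arc whose set of entries is `S`. -/
structure Hypertournament (n k : ℕ) where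
  arcs : Finset (List (Fin n))
  nodup : ∀ e ∈ arcs, e.Nodup
  len : ∀ e ∈ arcs, e.length = k
  complete : ∀ S : Finset (Fin n), S.card = k → ∃! e, e ∈ arcs ∧ e.toFinset = S

/-- The score of a vertex `v`: the number of arcs containing `v` in which `v` is
not the last entry. -/
def score {n k : ℕ} (H : Hypertournament n k) (v : Fin n) : ℕ :=
  (H.arcs.filter (fun e => v ∈ e.toFinset ∧ e.getLast? ≠ some v)).card

/-- `s` (on indices `< n`) lists, up to order, the scores of the vertices of some
k-hypertournament. -/
def IsScoreSequence (n k : ℕ) (s : ℕ → ℕ) : Prop :=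
  ∃ (H : Hypertournament n k) (σ : Equiv.Perm (Fin n)),
    ∀ i : Fin n, s i.val = score H (σ i)

/-!
Let the losing score `ℓ v` count the arcs ending at `v`; then `score v + ℓ v = C(n-1,k-1)`.
All `C(#W,k)` arcs inside a vertex set `W` end in `W`, so `∑_{v ∈ W} ℓ v ≥ C(#W,k)`, with
`∑ ℓ = C(n,k)` overall. Translated to scores, the prefix condition at `j` is this inequality for
the complement of the `j` lowest scorers; for a non-decreasing sequence it implies the inequality
for every `W`, since the `j` smallest terms have the least sum. Conversely, with
`ℓ v := C(n-1,k-1) - s v`, the inequalities for all `W` are Hall's condition for choosing a last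
vertex in every `k`-set so that each `v` is chosen at most `ℓ v` times (split `v` into `ℓ v`
copies), hence exactly `ℓ v` times as both totals are `C(n,k)`; ordering every `k`-set to end at
its chosen vertex gives the hypertournament.
-/

open Finset

-- Hall's theorem applied after splitting every `a` into `c a` copies.
theorem Finset.exists_mem_card_fiber_le {ι α : Type*} [Fintype ι] [DecidableEq α]
    (t : ι → Finset α) (c : α → ℕ) (h : ∀ A : Finset ι, #A ≤ ∑ a ∈ A.biUnion t, c a) :
    ∃ f : ι → α, (∀ i, f i ∈ t i) ∧ ∀ a, #{i | f i = a} ≤ c a := by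
  let copies : ι → Finset (Σ _ : α, ℕ) := fun i => (t i).sigma fun a => range (c a)
  have hall : ∀ A : Finset ι, #A ≤ #(A.biUnion copies) := fun A => by
    have : A.biUnion copies = (A.biUnion t).sigma fun a => range (c a) := by
      ext ⟨a, m⟩
      simp only [copies, mem_biUnion, mem_sigma, mem_range]
      tauto
    simpa [this, card_sigma] using h A
  obtain ⟨g, hg, hgt⟩ := (all_card_le_biUnion_card_iff_exists_injective copies).1 hall
  refine ⟨fun i => (g i).1, fun i => (mem_sigma.1 (hgt i)).1, fun a => ?_⟩
  rw [← card_range (c a)]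
  refine card_le_card_of_injOn (fun i => (g i).2) (fun i hi => ?_) (fun i hi j hj hij => hg ?_)
  · simp only [coe_filter, mem_univ, true_and, Set.mem_ofPred_eq] at hi
    simpa [hi] using (mem_sigma.1 (hgt i)).2
  · simp only [coe_filter, mem_univ, true_and, Set.mem_ofPred_eq] at hi hj
    exact Sigma.ext (hi.trans hj.symm) (heq_of_eq hij)

theorem Finset.sum_range_card_le_sum {M : Type*} [AddCommMonoid M] [PartialOrder M]
    [IsOrderedAddMonoid M] {s : ℕ → M} {n : ℕ} (hs : MonotoneOn s (Set.Iio n)) {U : Finset ℕ}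
    (hU : U ⊆ range n) : ∑ i ∈ range #U, s i ≤ ∑ i ∈ U, s i := by
  induction U using Finset.induction_on_max with
  | empty => simp
  | insert a U hlt ih =>
    have ha : a ∉ U := fun h => lt_irrefl a (hlt a h)
    have hUa : #U ≤ a := by simpa using card_le_card fun x hx => mem_range.2 (hlt x hx)
    have han : a < n := mem_range.1 (hU (mem_insert_self a U))
    rw [card_insert_of_notMem ha, sum_range_succ, sum_insert ha, add_comm (s a)]
    exact add_le_add (ih ((subset_insert a U).trans hU))
      (hs (Set.mem_Iio.2 (hUa.trans_lt han)) (Set.mem_Iio.2 han) hUa)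

theorem sum_add_choose_card_le_of_prefix {n k : ℕ} {c : ℤ} {s : ℕ → ℤ}
    (hs : MonotoneOn s (Set.Iio n))
    (hpre : ∀ j ≤ n, j * c + (n - j).choose k - n.choose k ≤ ∑ i ∈ range j, s i)
    (htot : ∑ i ∈ range n, s i = n * c - n.choose k) {U : Finset ℕ} (hU : U ⊆ range n) :
    ∑ i ∈ U, s i + (#U).choose k ≤ #U * c := by
  have hUn : #U ≤ n := by simpa using card_le_card hU
  have hsorted := sum_range_card_le_sum hs (sdiff_subset : range n \ U ⊆ range n)
  rw [card_sdiff_of_subset hU, card_range] at hsorted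
  have hprefix := hpre (n - #U) (Nat.sub_le _ _)
  rw [Nat.sub_sub_self hUn, Nat.cast_sub hUn] at hprefix
  have hsplit := sum_sdiff hU (f := s)
  linear_combination hsorted + hprefix + hsplit + htot

lemma exists_card_eq_sum_range_eq {M : Type*} [AddCommMonoid M] {n j : ℕ} {s : ℕ → M}
    {f : Fin n → M} (hsf : ∀ i : Fin n, s i = f i) (hj : j ≤ n) :
    ∃ T : Finset (Fin n), #T = j ∧ ∑ i ∈ range j, s i = ∑ v ∈ T, f v :=
  ⟨univ.map (Fin.castLEEmb hj), by simp, by simp [sum_range, sum_map, ← hsf]⟩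

namespace Hypertournament

variable {n k : ℕ} (H : Hypertournament n k)

def losingScore (v : Fin n) : ℕ :=
  #{e ∈ H.arcs | e.getLast? = some v}

lemma card_toFinset {e : List (Fin n)} (he : e ∈ H.arcs) : #e.toFinset = k := by
  rw [List.toFinset_card_of_nodup (H.nodup e he), H.len e he]

lemma card_filter_arcs (P : Finset (Fin n) → Prop) [DecidablePred P] :
    #{e ∈ H.arcs | P e.toFinset} = #{S ∈ univ.powersetCard k | P S} := by
  refine card_nbij (fun e => e.toFinset) (fun e he => ?_) (fun e₁ he₁ e₂ he₂ h => ?_)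
    (fun S hS => ?_)
  · simp only [coe_filter, Set.mem_ofPred_eq, mem_powersetCard] at he ⊢
    exact ⟨⟨subset_univ _, H.card_toFinset he.1⟩, he.2⟩
  · simp only [coe_filter, Set.mem_ofPred_eq] at he₁ he₂
    obtain ⟨e, -, he⟩ := H.complete _ (H.card_toFinset he₁.1)
    rw [he e₁ ⟨he₁.1, rfl⟩, he e₂ ⟨he₂.1, h.symm⟩]
  · simp only [coe_filter, Set.mem_ofPred_eq, mem_powersetCard] at hS
    obtain ⟨e, ⟨he, rfl⟩, -⟩ := H.complete S hS.1.2
    exact ⟨e, by simpa [he] using hS.2, rfl⟩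

lemma card_arcs : #H.arcs = n.choose k := by
  simpa using H.card_filter_arcs (fun _ => True)

lemma score_add_losingScore (hk : 1 ≤ k) (v : Fin n) :
    score H v + H.losingScore v = (n - 1).choose (k - 1) := by
  have hlast : {e ∈ H.arcs | e.getLast? = some v} =
      {e ∈ H.arcs | v ∈ e.toFinset ∧ e.getLast? = some v} :=
    filter_congr fun e _ =>
      ⟨fun h => ⟨List.mem_toFinset.2 (List.mem_of_getLast? h), h⟩, And.right⟩
  have hmem := H.card_filter_arcs ({v} ⊆ ·)
  rw [card_filter_powersetCard_subset _ _ _ (subset_univ _) (by simpa using hk)] at hmem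
  simp only [singleton_subset_iff, card_singleton, card_univ, Fintype.card_fin] at hmem
  rw [score, losingScore, hlast, ← hmem, ← filter_filter, ← filter_filter]
  simp only [ne_eq]
  exact add_comm _ _ |>.trans (card_filter_add_card_filter_not _)

lemma sum_losingScore_eq (W : Finset (Fin n)) :
    ∑ v ∈ W, H.losingScore v = #{e ∈ H.arcs | e.getLast? ∈ W.map .some} := by
  rw [← sum_card_fiberwise_eq_card_filter, sum_map]
  rfl

lemma choose_card_le_sum_losingScore (hk : 1 ≤ k) (W : Finset (Fin n)) :
    (#W).choose k ≤ ∑ v ∈ W, H.losingScore v := by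
  have hinside : #{e ∈ H.arcs | e.toFinset ⊆ W} = (#W).choose k := by
    rw [H.card_filter_arcs (· ⊆ W), ← card_powersetCard]
    congr 1
    ext S
    simp only [mem_filter, mem_powersetCard, subset_univ, true_and]
    tauto
  rw [← hinside, sum_losingScore_eq]
  refine card_le_card (monotone_filter_right _ fun e he hsub => ?_)
  have hne : e ≠ [] := by
    rintro rfl
    have := H.len _ he
    simp at this
    omega
  obtain ⟨a, ha⟩ := Option.isSome_iff_exists.1 (List.getLast?_isSome.2 hne)
  exact mem_map.2 ⟨a, hsub (List.mem_toFinset.2 (List.mem_of_getLast? ha)), ha.symm⟩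

lemma sum_losingScore (hk : 1 ≤ k) : ∑ v, H.losingScore v = n.choose k := by
  refine le_antisymm ?_ (by simpa using H.choose_card_le_sum_losingScore hk univ)
  rw [sum_losingScore_eq, ← H.card_arcs]
  exact card_filter_le _ _

lemma card_mul_add_choose_le_sum_score (hk : 1 ≤ k) (T : Finset (Fin n)) :
    #T * (n - 1).choose (k - 1) + (n - #T).choose k ≤ ∑ v ∈ T, score H v + n.choose k := by
  have hT : ∑ v ∈ T, score H v + ∑ v ∈ T, H.losingScore v = #T * (n - 1).choose (k - 1) := by
    rw [← sum_add_distrib, sum_congr rfl fun v _ => H.score_add_losingScore hk v, sum_const,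
      smul_eq_mul]
  have hcompl := H.choose_card_le_sum_losingScore hk Tᶜ
  rw [card_compl, Fintype.card_fin] at hcompl
  have htotal := sum_add_sum_compl T H.losingScore
  rw [H.sum_losingScore hk] at htotal
  omega

lemma sum_score_add_choose (hk : 1 ≤ k) :
    ∑ v, score H v + n.choose k = n * (n - 1).choose (k - 1) := by
  rw [← H.sum_losingScore hk, ← sum_add_distrib,
    sum_congr rfl fun v _ => H.score_add_losingScore hk v, sum_const, card_univ,
    Fintype.card_fin, smul_eq_mul]

def arcEndingAt (S : Finset (Fin n)) (v : Fin n) : List (Fin n) :=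
  (S.erase v).sort (· ≤ ·) ++ [v]

lemma toFinset_arcEndingAt {S : Finset (Fin n)} {v : Fin n} (hv : v ∈ S) :
    (arcEndingAt S v).toFinset = S := by
  simp [arcEndingAt, insert_erase hv]

def ofLoser (f : {S : Finset (Fin n) // #S = k} → Fin n) (hf : ∀ S, f S ∈ S.1) :
    Hypertournament n k where
  arcs := univ.image fun S => arcEndingAt S.1 (f S)
  nodup := by
    simp only [mem_image, mem_univ, true_and, forall_exists_index]
    rintro _ S rfl
    simp only [arcEndingAt, List.nodup_append, sort_nodup, List.nodup_singleton, mem_sort,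
      mem_erase, List.mem_singleton, true_and]
    exact fun a ha b hb hab => ha.1 (hab.trans hb)
  len := by
    simp only [mem_image, mem_univ, true_and, forall_exists_index]
    rintro _ S rfl
    have := card_pos.2 ⟨_, hf S⟩
    simp only [arcEndingAt, List.length_append, length_sort, card_erase_of_mem (hf S), S.2,
      List.length_singleton]
    omega
  complete := by
    intro S hS
    refine ⟨arcEndingAt S (f ⟨S, hS⟩),
      ⟨mem_image_of_mem _ (mem_univ _), toFinset_arcEndingAt (hf _)⟩, ?_⟩
    simp only [mem_image, mem_univ, true_and, and_imp, forall_exists_index]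
    rintro _ T rfl hT
    obtain rfl : T = ⟨S, hS⟩ := Subtype.ext ((toFinset_arcEndingAt (hf T)).symm.trans hT)
    rfl

lemma losingScore_ofLoser (f : {S : Finset (Fin n) // #S = k} → Fin n) (hf : ∀ S, f S ∈ S.1)
    (v : Fin n) :
    (ofLoser f hf).losingScore v = #{S | f S = v} := by
  rw [losingScore, ofLoser, filter_image, card_image_of_injOn]
  · simp [arcEndingAt]
  · intro S _ T _ h
    rw [Subtype.ext_iff, ← toFinset_arcEndingAt (hf S), ← toFinset_arcEndingAt (hf T)]
    exact congrArg _ h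

theorem exists_losingScore_eq (ℓ : Fin n → ℕ)
    (hW : ∀ W : Finset (Fin n), (#W).choose k ≤ ∑ v ∈ W, ℓ v) (htot : ∑ v, ℓ v = n.choose k) :
    ∃ H : Hypertournament n k, ∀ v, H.losingScore v = ℓ v := by
  obtain ⟨f, hf, hfiber⟩ :=
    exists_mem_card_fiber_le (fun S : {S : Finset (Fin n) // #S = k} => S.1) ℓ fun A => calc
      #A ≤ #((A.biUnion (·.1)).powersetCard k) :=
        card_le_card_of_injOn (·.1)
          (fun S hS => mem_powersetCard.2 ⟨subset_biUnion_of_mem (·.1) hS, S.2⟩)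
          (fun S _ T _ h => Subtype.ext h)
      _ ≤ ∑ v ∈ A.biUnion (·.1), ℓ v := by rw [card_powersetCard]; exact hW _
  refine ⟨ofLoser f hf, fun v => ?_⟩
  have hsum : ∑ v, #{S | f S = v} = ∑ v, ℓ v := by
    rw [htot, ← card_eq_sum_card_fiberwise fun _ _ => mem_univ _, card_univ,
      Fintype.card_finset_len, Fintype.card_fin]
  rw [losingScore_ofLoser]
  exact (sum_eq_sum_iff_of_le fun v _ => hfiber v).1 hsum v (mem_univ v)

end Hypertournament

namespace IsScoreSequence

variable {n k : ℕ} {s : ℕ → ℕ}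

theorem card_mul_add_choose_le_sum_range (hk : 1 ≤ k) (h : IsScoreSequence n k s) {j : ℕ}
    (hj : j ≤ n) :
    j * (n - 1).choose (k - 1) + (n - j).choose k ≤ ∑ i ∈ range j, s i + n.choose k := by
  obtain ⟨H, σ, hσ⟩ := h
  obtain ⟨T, rfl, hT⟩ := exists_card_eq_sum_range_eq hσ hj
  simpa [hT, sum_map] using H.card_mul_add_choose_le_sum_score hk (T.map σ.toEmbedding)

theorem sum_range_add_choose (hk : 1 ≤ k) (h : IsScoreSequence n k s) :
    ∑ i ∈ range n, s i + n.choose k = n * (n - 1).choose (k - 1) := by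
  obtain ⟨H, σ, hσ⟩ := h
  rw [← H.sum_score_add_choose hk, sum_range, ← Equiv.sum_comp σ (score H)]
  simp [hσ]

end IsScoreSequence

theorem isScoreSequence_of_sum_add_choose_le {n k : ℕ} {s : ℕ → ℕ} (hk : 1 ≤ k)
    (hsub : ∀ U ⊆ range n, ∑ i ∈ U, (s i : ℤ) + (#U).choose k ≤ #U * (n - 1).choose (k - 1))
    (htot : ∑ i ∈ range n, (s i : ℤ) = n * (n - 1).choose (k - 1) - n.choose k) :
    IsScoreSequence n k s := by
  set c := (n - 1).choose (k - 1)
  have hsubFin (W : Finset (Fin n)) : ∑ v ∈ W, (s v : ℤ) + (#W).choose k ≤ #W * c := by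
    simpa [sum_map] using hsub (W.map Fin.valEmbedding) fun i hi => by
      obtain ⟨v, -, rfl⟩ := mem_map.1 hi
      exact mem_range.2 v.2
  have hle (v : Fin n) : s v ≤ c := by
    have := hsubFin {v}
    simp only [sum_singleton, card_singleton, Nat.cast_one, one_mul] at this
    omega
  have hsum_losing (W : Finset (Fin n)) :
      ((∑ v ∈ W, (c - s v) : ℕ) : ℤ) = #W * c - ∑ v ∈ W, (s v : ℤ) := by
    rw [Nat.cast_sum, sum_congr rfl fun v _ => Nat.cast_sub (hle v), sum_sub_distrib, sum_const,
      nsmul_eq_mul]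
  obtain ⟨H, hH⟩ := Hypertournament.exists_losingScore_eq (k := k) (fun v => c - s v)
    (fun W => by have := hsubFin W; have := hsum_losing W; omega)
    (by
      have := hsum_losing univ
      rw [card_univ, Fintype.card_fin, Fin.sum_univ_eq_sum_range (fun i => (s i : ℤ)),
        htot] at this
      omega)
  refine ⟨H, Equiv.refl _, fun v => ?_⟩
  have := H.score_add_losingScore hk v
  rw [hH] at this
  have := hle v
  simp only [Equiv.refl_apply]
  omega

theorem score_sequence_iff_general (n k : ℕ) (hk : 1 < k)
    (s : ℕ → ℕ) (hs : ∀ i j, i ≤ j → j < n → s i ≤ s j) :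
    IsScoreSequence n k s ↔
      ((∀ j, 1 ≤ j → j ≤ n →
          (j : ℤ) * Nat.choose (n - 1) (k - 1) + (Nat.choose (n - j) k : ℤ)
            - (Nat.choose n k : ℤ) ≤ ∑ i ∈ Finset.range j, (s i : ℤ)) ∧
        ∑ i ∈ Finset.range n, (s i : ℤ) =
          (n : ℤ) * Nat.choose (n - 1) (k - 1) + (Nat.choose (n - n) k : ℤ)
            - (Nat.choose n k : ℤ)) := by
  have hk₁ : 1 ≤ k := hk.le
  rw [Nat.sub_self, Nat.choose_eq_zero_of_lt hk₁, Nat.cast_zero, add_zero]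
  constructor
  · intro h
    refine ⟨fun j _ hj => ?_, ?_⟩
    · have := h.card_mul_add_choose_le_sum_range hk₁ hj
      zify at this
      linarith
    · have := h.sum_range_add_choose hk₁
      zify at this
      linarith
  · rintro ⟨hpre, htot⟩
    have hpre₀ : ∀ j ≤ n, (j : ℤ) * (n - 1).choose (k - 1) + (n - j).choose k - n.choose k
        ≤ ∑ i ∈ range j, (s i : ℤ) := fun j hj => by
      rcases Nat.eq_zero_or_pos j with rfl | hj₀
      · simp
      · exact hpre j hj₀ hj
    have hmono : MonotoneOn (fun i => (s i : ℤ)) (Set.Iio n) :=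
      fun i _ j hj hij => Int.ofNat_le.2 (hs i j hij hj)
    exact isScoreSequence_of_sum_add_choose_le hk₁
      (fun U hU => sum_add_choose_card_le_of_prefix hmono hpre₀ htot hU) htot

/-- Theorem 1.2 (Zhou, Yao, Zhang): a non-decreasing sequence `s 0, …, s (n-1)` of
non-negative integers is a score sequence of some k-hypertournament iff
`∑_{i<j} s i ≥ j·C(n-1,k-1) + C(n-j,k) - C(n,k)` for all `1 ≤ j ≤ n`,
with equality when `j = n`. -/
theorem score_sequence_iff (n k : ℕ) (hk : 1 < k) (hn : k ≤ n)
    (s : ℕ → ℕ) (hs : ∀ i j, i ≤ j → j < n → s i ≤ s j) :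
    IsScoreSequence n k s ↔
      ((∀ j, 1 ≤ j → j ≤ n →
          (j : ℤ) * Nat.choose (n - 1) (k - 1) + (Nat.choose (n - j) k : ℤ)
            - (Nat.choose n k : ℤ) ≤ ∑ i ∈ Finset.range j, (s i : ℤ)) ∧
        ∑ i ∈ Finset.range n, (s i : ℤ) =
          (n : ℤ) * Nat.choose (n - 1) (k - 1) + (Nat.choose (n - n) k : ℤ)
            - (Nat.choose n k : ℤ)) :=
  score_sequence_iff_general n k hk s hs
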